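/- arXiv:1306.6669 — 9 statements merged into one kernel-verified Lean document; each statement's English description precedes it below -/
import Mathlib

section
/- Let E be a directed graph and H, K ⊆ E⁰ be hereditary subsets of vertices with H ∩ K = ∅. Then the saturations of H and K are also disjoint: H̄ ∩ K̄ = ∅. -/
structure DGraph where
  V : Type*
  E : Type*
  s : E → V
  r : E → V

namespace DGraph

variable (G : DGraph)

/-- There is an edge from `u` to `v`. -/
def Step (u v : G.V) : Prop := ∃ e : G.E, G.s e = u ∧ G.r e = v

/-- There is a (possibly empty) directed path from `u` to `v`; i.e. `u ≥ v`. -/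
def Reach (u v : G.V) : Prop := Relation.ReflTransGen G.Step u v

/-- A set of vertices is hereditary. -/
def Hereditary (H : Set G.V) : Prop := ∀ e : G.E, G.s e ∈ H → G.r e ∈ H

/-- A vertex is regular if it emits at least one and only finitely many edges. -/
def Regular (v : G.V) : Prop := {e : G.E | G.s e = v}.Nonempty ∧ {e : G.E | G.s e = v}.Finite

/-- A set of vertices is saturated. -/
def Saturated (H : Set G.V) : Prop :=
  ∀ v : G.V, G.Regular v → (∀ e : G.E, G.s e = v → G.r e ∈ H) → v ∈ H

/-- The saturation of a set: the smallest saturated hereditary set containing it. -/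
def Sat (H : Set G.V) : Set G.V :=
  ⋂₀ {K : Set G.V | H ⊆ K ∧ G.Hereditary K ∧ G.Saturated K}

/-- `HV v` is the set of vertices reachable from `v`. -/
def HV (v : G.V) : Set G.V := {w | G.Reach v w}

/-- `U w` is the set of vertices from which `w` is reachable. -/
def U (w : G.V) : Set G.V := {v | G.Reach v w}

/-- The Countable Separation Property. -/
def CSP : Prop := ∃ X : Set G.V, X.Countable ∧ ∀ v : G.V, ∃ x ∈ X, G.Reach v x

/-- Downward directedness. -/
def DownwardDirected : Prop := ∀ u v : G.V, ∃ w : G.V, G.Reach u w ∧ G.Reach v w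

/-- `e` is a cycle of length `n+1` (edges `e 0, …, e n`). -/
def IsCycle {n : ℕ} (e : Fin (n + 1) → G.E) : Prop :=
  (∀ i : Fin n, G.r (e i.castSucc) = G.s (e i.succ)) ∧ G.r (e (Fin.last n)) = G.s (e 0)

/-- `e` is a simple cycle. -/
def IsSimpleCycle {n : ℕ} (e : Fin (n + 1) → G.E) : Prop :=
  G.IsCycle e ∧ ∀ i : Fin n, G.r (e i.castSucc) ≠ G.s (e 0)

end DGraph

/-- Iterative saturation. -/
def SatN (G : DGraph) (H : Set G.V) : ℕ → Set G.V
  | 0 => H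
  | n + 1 => SatN G H n ∪
      {v | G.Regular v ∧ ∀ e : G.E, G.s e = v → G.r e ∈ SatN G H n}

lemma satN_mono (G : DGraph) (H : Set G.V) {n m : ℕ} (h : n ≤ m) :
    SatN G H n ⊆ SatN G H m := by
  induction m, h using Nat.le_induction with
  | base => exact le_refl _
  | succ m _ ih => exact ih.trans (Set.subset_union_left)

lemma satN_hereditary (G : DGraph) (H : Set G.V) (hH : G.Hereditary H) (n : ℕ) :
    G.Hereditary (SatN G H n) := by
  induction n with
  | zero => exact hH
  | succ n ih =>
    intro e he
    rcases he with he | ⟨_, hsucc⟩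
    · exact Set.subset_union_left (ih e he)
    · exact Set.subset_union_left (hsucc e rfl)

lemma sat_subset_iUnion (G : DGraph) (H : Set G.V) (hH : G.Hereditary H) :
    G.Sat H ⊆ ⋃ n, SatN G H n := by
  apply Set.sInter_subset_of_mem
  refine ⟨fun v hv => Set.mem_iUnion.2 ⟨0, hv⟩, ?_, ?_⟩
  · intro e he
    rcases Set.mem_iUnion.1 he with ⟨n, hn⟩
    exact Set.mem_iUnion.2 ⟨n, satN_hereditary G H hH n e hn⟩
  · classical
    intro v hreg hsucc
    -- choose a uniform level for all (finitely many) edges out of v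
    have hlev : ∀ e : G.E, G.s e = v → ∃ n, G.r e ∈ SatN G H n := by
      intro e he
      exact Set.mem_iUnion.1 (hsucc e he)
    choose f hf using hlev
    have hfin : ({e : G.E | G.s e = v}.image (fun e => if h : G.s e = v then f e h else 0)).Finite :=
      hreg.2.image _
    obtain ⟨N, hN⟩ := hfin.bddAbove
    refine Set.mem_iUnion.2 ⟨N + 1, Or.inr ⟨hreg, ?_⟩⟩
    intro e he
    have hle : f e he ≤ N := by
      have : (if h : G.s e = v then f e h else 0) ∈
          ({e : G.E | G.s e = v}.image (fun e => if h : G.s e = v then f e h else 0)) :=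
        Set.mem_image_of_mem _ he
      have := hN this
      simpa [he] using this
    exact satN_mono G H hle (hf e he)

lemma satN_disjoint (G : DGraph) (H K : Set G.V)
    (hH : G.Hereditary H) (hK : G.Hereditary K) (hdisj : H ∩ K = ∅) :
    ∀ p n m, n + m = p → ∀ v : G.V, v ∈ SatN G H n → v ∈ SatN G K m → False := by
  intro p
  induction p using Nat.strong_induction_on with
  | _ p ih =>
    intro n m hp v hvH hvK
    have hd := Set.eq_empty_iff_forall_notMem.1 hdisj
    match n, m with
    | 0, 0 => exact hd v ⟨hvH, hvK⟩
    | 0, m' + 1 =>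
      rcases hvK with hvK | ⟨hreg, hsucc⟩
      · exact ih (0 + m') (by omega) 0 m' rfl v hvH hvK
      · obtain ⟨e, he⟩ := hreg.1
        exact ih (0 + m') (by omega) 0 m' rfl (G.r e) (hH e (he ▸ hvH)) (hsucc e he)
    | n' + 1, 0 =>
      rcases hvH with hvH | ⟨hreg, hsucc⟩
      · exact ih (n' + 0) (by omega) n' 0 rfl v hvH hvK
      · obtain ⟨e, he⟩ := hreg.1
        exact ih (n' + 0) (by omega) n' 0 rfl (G.r e) (hsucc e he) (hK e (he ▸ hvK))
    | n' + 1, m' + 1 =>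
      rcases hvH with hvH | hH'
      · exact ih (n' + (m' + 1)) (by omega) n' (m' + 1) rfl v hvH hvK
      rcases hvK with hvK | hK'
      · exact ih ((n' + 1) + m') (by omega) (n' + 1) m' rfl v (Or.inr hH') hvK
      obtain ⟨e, he⟩ := hH'.1.1
      exact ih (n' + m') (by omega) n' m' rfl (G.r e) (hH'.2 e he) (hK'.2 e he)

/-- If `H` and `K` are disjoint hereditary subsets of vertices of a graph, then their
saturations are disjoint. -/
theorem sat_disjoint (G : DGraph) (H K : Set G.V)
    (hH : G.Hereditary H) (hK : G.Hereditary K) (hdisj : H ∩ K = ∅) :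
    G.Sat H ∩ G.Sat K = ∅ := by
  ext v
  simp only [Set.mem_inter_iff, Set.mem_empty_iff_false, iff_false]
  rintro ⟨hvH, hvK⟩
  obtain ⟨n, hn⟩ := Set.mem_iUnion.1 (sat_subset_iUnion G H hH hvH)
  obtain ⟨m, hm⟩ := Set.mem_iUnion.1 (sat_subset_iUnion G K hK hvK)
  exact satN_disjoint G H K hH hK hdisj (n + m) n m rfl v hn hm
end

section
/- Let E be a directed graph. E is cofinal in the sense that for every vertex v the saturation of H(v) equals E⁰ if and only if for every vertex v and every infinite path or singular vertex α, v connects to some vertex of α. -/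
/-- `Sat(H(v)) = E⁰` for every vertex `v` if and only if for every vertex `v` and every
singular vertex or infinite path `α`, `v` connects to (a vertex of) `α`. -/
theorem cofinal_iff_sat_eq_univ (G : DGraph) :
    (∀ v : G.V, G.Sat (G.HV v) = Set.univ) ↔
      ((∀ v w : G.V, ¬ G.Regular w → G.Reach v w) ∧
        ∀ (v : G.V) (p : ℕ → G.E), (∀ n : ℕ, G.r (p n) = G.s (p (n + 1))) →
          ∃ n : ℕ, G.Reach v (G.s (p n))) := by
  constructor
  · intro h
    constructor
    · intro v w hw
      by_contra hvw
      have hK : w ∈ G.Sat (G.HV v) := by rw [h v]; trivial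
      have hmem : w ∈ {u | ¬ G.Reach u w} := by
        refine hK _ ⟨?_, ?_, ?_⟩
        · intro u hu hc; exact hvw (hu.trans hc)
        · intro e he hc
          exact he (Relation.ReflTransGen.head ⟨e, rfl, rfl⟩ hc)
        · intro u hreg hsucc hc
          rcases Relation.ReflTransGen.cases_head hc with rfl | ⟨x, hx, hxw⟩
          · exact hw hreg
          · obtain ⟨e, hse, hre⟩ := hx
            exact hsucc e hse (hre ▸ hxw)
      exact hmem Relation.ReflTransGen.refl
    · intro v p hp
      by_contra hvp
      push_neg at hvp
      have hK : G.s (p 0) ∈ G.Sat (G.HV v) := by rw [h v]; trivial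
      have hmem : G.s (p 0) ∈ {u | ∀ n, ¬ G.Reach u (G.s (p n))} := by
        refine hK _ ⟨?_, ?_, ?_⟩
        · intro u hu n hc; exact hvp n (hu.trans hc)
        · intro e he n hc
          exact he n (Relation.ReflTransGen.head ⟨e, rfl, rfl⟩ hc)
        · intro u hreg hsucc n hc
          rcases Relation.ReflTransGen.cases_head hc with heq | ⟨x, hx, hxw⟩
          · have hr : G.r (p n) ∈ {u | ∀ n, ¬ G.Reach u (G.s (p n))} :=
              hsucc (p n) heq.symm
            exact hr (n + 1) ((hp n) ▸ Relation.ReflTransGen.refl)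
          · obtain ⟨e, hse, hre⟩ := hx
            exact hsucc e hse n (hre ▸ hxw)
      exact hmem 0 Relation.ReflTransGen.refl
  · rintro ⟨h1, h2⟩ v
    rw [Set.eq_univ_iff_forall]
    intro w
    rw [DGraph.Sat, Set.mem_sInter]
    rintro K ⟨hsub, hher, hsat⟩
    by_contra hw
    have key : ∀ u : G.V, u ∉ K → ∃ e : G.E, G.s e = u ∧ G.r e ∉ K := by
      intro u hu
      have hreg : G.Regular u := by
        by_contra hr
        exact hu (hsub (h1 v u hr))
      by_contra hne
      push_neg at hne
      exact hu (hsat u hreg fun e he => hne e he)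
    choose f hf1 hf2 using key
    let W : ℕ → {u : G.V // u ∉ K} := fun n =>
      Nat.rec ⟨w, hw⟩ (fun _ prev => ⟨G.r (f prev.1 prev.2), hf2 prev.1 prev.2⟩) n
    let p : ℕ → G.E := fun n => f (W n).1 (W n).2
    have hpath : ∀ n, G.r (p n) = G.s (p (n + 1)) := by
      intro n
      have h1' : G.s (p (n + 1)) = (W (n + 1)).1 := hf1 _ _
      have h2' : (W (n + 1)).1 = G.r (p n) := rfl
      rw [h1', h2']
    obtain ⟨n, hn⟩ := h2 v p hpath
    rw [hf1] at hn
    exact (W n).2 (hsub hn)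
end

section
/- Let E be a directed graph. E is downward directed if and only if for all vertices v, w, the saturations of H(v) and H(w) have nonempty intersection. -/
/-- Inductive description of the saturation. -/
inductive SatI (G : DGraph) (H : Set G.V) : G.V → Prop
  | base {x : G.V} : x ∈ H → SatI G H x
  | hered (e : G.E) : SatI G H (G.s e) → SatI G H (G.r e)
  | sat {v : G.V} : G.Regular v → (∀ e : G.E, G.s e = v → SatI G H (G.r e)) →
      SatI G H v

lemma sat_subset_satI (G : DGraph) (H : Set G.V) : G.Sat H ⊆ {x | SatI G H x} := by
  intro x hx
  refine hx _ ⟨fun y hy => SatI.base hy, ?_, ?_⟩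
  · intro e he; exact SatI.hered e he
  · intro v hv h; exact SatI.sat hv h

lemma satI_reach (G : DGraph) (v x : G.V) (hx : SatI G (G.HV v) x) :
    ∀ z : G.V, G.Reach x z → ∃ t : G.V, G.Reach z t ∧ G.Reach v t := by
  induction hx with
  | @base x hx =>
      intro z hz
      exact ⟨z, Relation.ReflTransGen.refl, Relation.ReflTransGen.trans hx hz⟩
  | hered e _ ih =>
      intro z hz
      exact ih z (Relation.ReflTransGen.trans
        (Relation.ReflTransGen.single ⟨e, rfl, rfl⟩) hz)
  | @sat u hu _ ih =>
      intro z hz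
      rcases Relation.reflTransGen_iff_eq_or_transGen.mp hz with rfl | htz
      · rcases hu.1 with ⟨e, he⟩
        rcases ih e he (G.r e) Relation.ReflTransGen.refl with ⟨t, ht1, ht2⟩
        refine ⟨t, ?_, ht2⟩
        exact Relation.ReflTransGen.trans
          (Relation.ReflTransGen.single ⟨e, he, rfl⟩) ht1
      · rcases Relation.TransGen.head'_iff.mp htz
          with ⟨m, hm, hmz⟩
        rcases hm with ⟨e, he, hre⟩
        exact ih e he z (hre.symm ▸ hmz)

/-- `E` is downward directed if and only if the saturations of `H(v)` and `H(w)` intersect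
for all vertices `v, w`. -/
theorem downwardDirected_iff_sat_inter_nonempty (G : DGraph) :
    G.DownwardDirected ↔ ∀ v w : G.V, (G.Sat (G.HV v) ∩ G.Sat (G.HV w)).Nonempty := by
  constructor
  · intro hdd v w
    rcases hdd v w with ⟨x, hvx, hwx⟩
    exact ⟨x, fun K hK => hK.1 hvx, fun K hK => hK.1 hwx⟩
  · intro h u v
    rcases h u v with ⟨y, hyu, hyv⟩
    rcases satI_reach G u y (sat_subset_satI G _ hyu) y Relation.ReflTransGen.refl
      with ⟨t₁, hyt₁, hut₁⟩
    rcases satI_reach G v y (sat_subset_satI G _ hyv) t₁ hyt₁ with ⟨t, ht₁t, hvt⟩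
    exact ⟨t, Relation.ReflTransGen.trans hut₁ ht₁t, hvt⟩
end

section
/- Let E be a directed graph. Then E satisfies the Countable Separation Property if and only if there exists a countable collection {S_i : i ∈ I} of subsets of E⁰ with E⁰ = ⋃_{i ∈ I} S_i and with ⋂_{v ∈ S_i} H̄(v) ≠ ∅ for every i ∈ I. -/
namespace DGraph
variable (G : DGraph)

def SatSeq (H : Set G.V) : ℕ → Set G.V
  | 0 => H
  | n+1 => SatSeq H n ∪ {v | G.Regular v ∧ ∀ e, G.s e = v → G.r e ∈ SatSeq H n}

lemma satSeq_mono (H : Set G.V) : Monotone (G.SatSeq H) :=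
  monotone_nat_of_le_succ fun _ => Set.subset_union_left

lemma hereditary_satSeq {H : Set G.V} (hH : G.Hereditary H) (n : ℕ) :
    G.Hereditary (G.SatSeq H n) := by
  induction n with
  | zero => exact hH
  | succ n ih =>
    intro e he
    rcases he with h | h
    · exact Or.inl (ih e h)
    · exact Or.inl (h.2 e rfl)

lemma sat_subset_iUnion_satSeq {H : Set G.V} (hH : G.Hereditary H) :
    G.Sat H ⊆ ⋃ n, G.SatSeq H n := by
  apply Set.sInter_subset_of_mem
  refine ⟨Set.subset_iUnion (G.SatSeq H) 0, ?_, ?_⟩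
  · intro e he
    rcases Set.mem_iUnion.mp he with ⟨n, hn⟩
    exact Set.mem_iUnion.mpr ⟨n, G.hereditary_satSeq hH n e hn⟩
  · intro v hreg hall
    have hch : ∀ e, G.s e = v → ∃ n, G.r e ∈ G.SatSeq H n :=
      fun e he => Set.mem_iUnion.mp (hall e he)
    choose g hg using hch
    classical
    set t := hreg.2.toFinset with ht
    set N := t.sup (fun e => if h : G.s e = v then g e h else 0) with hN
    refine Set.mem_iUnion.mpr ⟨N + 1, Or.inr ⟨hreg, fun e he => ?_⟩⟩
    have hmem : e ∈ t := hreg.2.mem_toFinset.mpr he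
    have hle : g e he ≤ N := by
      have := Finset.le_sup (f := fun e => if h : G.s e = v then g e h else 0) hmem
      simpa [he] using this
    exact G.satSeq_mono H hle (hg e he)

def RegStep (u v : G.V) : Prop := G.Regular u ∧ G.Step u v

lemma finite_regStep (u : G.V) : {z | G.RegStep u z}.Finite := by
  by_cases h : G.Regular u
  · apply (h.2.image G.r).subset
    rintro z ⟨-, e, he, rfl⟩
    exact ⟨e, he, rfl⟩
  · convert Set.finite_empty
    ext z
    simp only [Set.mem_setOf_eq, Set.mem_empty_iff_false, iff_false]
    exact fun hz => h hz.1

lemma countable_regReach (w : G.V) :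
    {z | Relation.ReflTransGen G.RegStep w z}.Countable := by
  classical
  let stage : ℕ → Set G.V := fun n => Nat.rec {w}
    (fun _ s => ⋃ u ∈ s, {z | G.RegStep u z}) n
  have hfin : ∀ n, (stage n).Finite := by
    intro n
    induction n with
    | zero => exact Set.finite_singleton w
    | succ n ih => exact ih.biUnion fun u _ => G.finite_regStep u
  have hsub : {z | Relation.ReflTransGen G.RegStep w z} ⊆ ⋃ n, stage n := by
    intro z hz
    induction hz with
    | refl => exact Set.mem_iUnion.mpr ⟨0, rfl⟩
    | tail _ hstep ih =>
      obtain ⟨n, hn⟩ := Set.mem_iUnion.mp ih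
      exact Set.mem_iUnion.mpr ⟨n + 1, Set.mem_biUnion hn hstep⟩
  exact (Set.countable_iUnion fun n => (hfin n).countable).mono hsub

lemma hereditary_HV (v : G.V) : G.Hereditary (G.HV v) :=
  fun e he => Relation.ReflTransGen.tail he ⟨e, rfl, rfl⟩

lemma exists_reach_of_mem_satSeq (v : G.V) (n : ℕ) :
    ∀ u ∈ G.SatSeq (G.HV v) n, ∃ z, Relation.ReflTransGen G.RegStep u z ∧ G.Reach v z := by
  induction n with
  | zero => exact fun u hu => ⟨u, .refl, hu⟩
  | succ n ih =>
    intro u hu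
    rcases hu with h | h
    · exact ih u h
    · obtain ⟨e, he⟩ := h.1.1
      obtain ⟨z, hz1, hz2⟩ := ih (G.r e) (h.2 e he)
      exact ⟨z, .head ⟨h.1, e, he, rfl⟩ hz1, hz2⟩

end DGraph

/-- `E` satisfies the Countable Separation Property if and only if there is a countable
collection `{S_i}` of subsets of vertices covering `E⁰` such that `⋂_{v ∈ S_i} Sat(H(v))`
is nonempty for every `i`. -/
theorem csp_iff_countable_cover_sat (G : DGraph) :
    G.CSP ↔ ∃ S : Set (Set G.V), S.Countable ∧ ⋃₀ S = Set.univ ∧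
      ∀ T ∈ S, (⋂ v ∈ T, G.Sat (G.HV v)).Nonempty := by
  constructor
  · rintro ⟨X, hXc, hX⟩
    refine ⟨(G.U) '' X, hXc.image _, ?_, ?_⟩
    · ext v
      simp only [Set.mem_sUnion, Set.mem_univ, iff_true]
      obtain ⟨x, hx, hr⟩ := hX v
      exact ⟨G.U x, ⟨x, hx, rfl⟩, hr⟩
    · rintro T ⟨x, hx, rfl⟩
      refine ⟨x, Set.mem_iInter₂.mpr fun v hv => ?_⟩
      exact Set.mem_sInter.mpr fun K hK => hK.1 hv
  · rintro ⟨S, hSc, hcov, hne⟩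
    choose w hw using hne
    haveI := hSc.to_subtype
    refine ⟨⋃ T : S, {z | Relation.ReflTransGen G.RegStep (w T T.2) z},
      Set.countable_iUnion fun T => G.countable_regReach _, fun v => ?_⟩
    obtain ⟨T, hT, hvT⟩ : ∃ T ∈ S, v ∈ T := by
      have : v ∈ ⋃₀ S := hcov ▸ Set.mem_univ v
      exact this
    have hwv : w T hT ∈ G.Sat (G.HV v) := Set.mem_iInter₂.mp (hw T hT) v hvT
    have := G.sat_subset_iUnion_satSeq (G.hereditary_HV v) hwv
    obtain ⟨n, hn⟩ := Set.mem_iUnion.mp this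
    obtain ⟨z, hz1, hz2⟩ := G.exists_reach_of_mem_satSeq v n _ hn
    exact ⟨z, Set.mem_iUnion.mpr ⟨⟨T, hT⟩, hz1⟩, hz2⟩
end

section
/- Let E be a directed graph. If E is cofinal (for every vertex v and every infinite path or singular vertex α, v connects to a vertex of α), then E is downward directed. -/
/-- If `E` is cofinal (every vertex connects to every singular vertex and to a vertex on
every infinite path), then `E` is downward directed. -/
theorem downwardDirected_of_cofinal (G : DGraph)
    (hsing : ∀ v w : G.V, ¬ G.Regular w → G.Reach v w)
    (hinf : ∀ (v : G.V) (p : ℕ → G.E), (∀ n : ℕ, G.r (p n) = G.s (p (n + 1))) →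
      ∃ n : ℕ, G.Reach v (G.s (p n))) :
    G.DownwardDirected := by
  intro u v
  by_cases h : ∃ w, G.Reach u w ∧ ¬ G.Regular w
  · obtain ⟨w, hw, hns⟩ := h
    exact ⟨w, hw, hsing v w hns⟩
  · push_neg at h
    have hedge : ∀ w : {w // G.Reach u w}, ∃ e : G.E, G.s e = w.1 :=
      fun w => (h w.1 w.2).1
    choose f hf using hedge
    let q : ℕ → {w // G.Reach u w} := fun n => Nat.rec ⟨u, Relation.ReflTransGen.refl⟩
      (fun _ w => ⟨G.r (f w), w.2.tail ⟨f w, hf w, rfl⟩⟩) n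
    let p : ℕ → G.E := fun n => f (q n)
    have hcomp : ∀ n, G.r (p n) = G.s (p (n + 1)) := by
      intro n
      have h1 : (q (n + 1)).1 = G.r (p n) := rfl
      rw [show G.s (p (n+1)) = (q (n+1)).1 from hf (q (n+1)), h1]
    obtain ⟨n, hn⟩ := hinf v p hcomp
    refine ⟨G.s (p n), ?_, hn⟩
    rw [show G.s (p n) = (q n).1 from hf (q n)]
    exact (q n).2
end

section
/- Let X be a set and E_A(X) the graph whose vertices are finite nonempty subsets of X with an edge from A to A′ whenever A ⊊ A′. Then E_A(X) satisfies the Countable Separation Property if and only if X is countable. -/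
/-- The graph `E_A(X)`: vertices are finite nonempty subsets of `X`, with one edge from
`A` to `A′` whenever `A ⊊ A′`. -/
def EA (X : Type*) : DGraph where
  V := {A : Finset X // A.Nonempty}
  E := {p : {A : Finset X // A.Nonempty} × {A : Finset X // A.Nonempty} // p.1.val ⊂ p.2.val}
  s := fun e => e.val.1
  r := fun e => e.val.2

theorem EA_reach_subset {X : Type*} {u v : (EA X).V} (h : (EA X).Reach u v) :
    u.val ⊆ v.val := by
  induction h with
  | refl => exact Finset.Subset.refl _
  | tail _ hstep ih =>
      obtain ⟨e, hs, hr⟩ := hstep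
      exact Finset.Subset.trans ih (hs ▸ hr ▸ e.property.subset)

/-- `E_A(X)` satisfies the Countable Separation Property if and only if `X` is countable. -/
theorem EA_csp_iff_countable (X : Type*) : (EA X).CSP ↔ Countable X := by
  constructor
  · rintro ⟨S, hSc, hS⟩
    have : (Set.univ : Set X).Countable := by
      have : (Set.univ : Set X) ⊆ ⋃ A ∈ S, (A.val : Set X) := by
        intro x _
        obtain ⟨A, hA, hreach⟩ := hS ⟨{x}, Finset.singleton_nonempty x⟩
        have hx : x ∈ A.val := EA_reach_subset hreach (Finset.mem_singleton_self x)
        exact Set.mem_biUnion hA hx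
      exact Set.Countable.mono this
        (hSc.biUnion fun A _ => (A.val.finite_toSet).countable)
    exact Set.countable_univ_iff.mp this
  · intro hX
    refine ⟨Set.univ, ?_, fun v => ⟨v, Set.mem_univ v, Relation.ReflTransGen.refl⟩⟩
    have h : Countable {A : Finset X // A.Nonempty} := inferInstance
    exact @Set.countable_univ _ h
end

section
/- Let X be an infinite set and E_L(X) the graph whose vertices are the finite nonempty subsets of X with exactly one edge from A to A′ whenever A ⊆ A′. Then every simple cycle in E_L(X) is a loop at a single vertex; consequently every vertex is the base of exactly one simple cycle, so E_L(X) does not satisfy Condition (K). -/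
/-- The graph `E_L(X)`: vertices are finite nonempty subsets of `X`, with exactly one edge
from `A` to `A′` whenever `A ⊆ A′` (in particular a loop at every vertex). -/
def EL (X : Type*) : DGraph where
  V := {A : Finset X // A.Nonempty}
  E := {p : {A : Finset X // A.Nonempty} × {A : Finset X // A.Nonempty} // p.1.val ⊆ p.2.val}
  s := fun e => e.val.1
  r := fun e => e.val.2

/-- The type of simple cycles of a graph based (with source) at the vertex `v`. -/
def SimpleCyclesAt (G : DGraph) (v : G.V) : Type _ :=
  {c : Σ n : ℕ, Fin (n + 1) → G.E // G.IsSimpleCycle c.2 ∧ G.s (c.2 0) = v}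

/-- Condition (K): no vertex is the source of exactly one simple cycle. -/
def ConditionK (G : DGraph) : Prop :=
  ∀ v : G.V, ¬ (Nonempty (SimpleCyclesAt G v) ∧ Subsingleton (SimpleCyclesAt G v))

/-- For an infinite set `X`: every simple cycle in `E_L(X)` is a loop (has length one) at a
single vertex; consequently every vertex is the base of exactly one simple cycle, and so
`E_L(X)` does not satisfy Condition (K). -/
theorem EL_simple_cycles_are_loops_and_not_conditionK (X : Type*) [Infinite X] :
    (∀ (n : ℕ) (e : Fin (n + 1) → (EL X).E), (EL X).IsSimpleCycle e →
        n = 0 ∧ (EL X).r (e 0) = (EL X).s (e 0)) ∧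
    (∀ v : (EL X).V, Nonempty (SimpleCyclesAt (EL X) v) ∧
        Subsingleton (SimpleCyclesAt (EL X) v)) ∧
    ¬ ConditionK (EL X) := by
  classical
  have key : ∀ (n : ℕ) (e : Fin (n + 1) → (EL X).E), (EL X).IsSimpleCycle e →
      n = 0 ∧ (EL X).r (e 0) = (EL X).s (e 0) := by
    intro n e he
    obtain ⟨⟨hc, hlast⟩, hs⟩ := he
    have mono : ∀ k : ℕ, k ≤ n →
        ((e ⟨n - k, by omega⟩).val.2.val : Finset X) ⊆ (e 0).val.1.val := by
      intro k
      induction k with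
      | zero =>
        intro _
        have h0 : (⟨n - 0, by omega⟩ : Fin (n+1)) = Fin.last n := by
          apply Fin.ext; simp [Fin.last]
        rw [h0]
        have := congrArg (fun v : (EL X).V => v.val) hlast
        exact le_of_eq this
      | succ k ih =>
        intro hk
        have hlt : n - (k+1) < n := by omega
        have hstep := hc ⟨n - (k+1), hlt⟩
        have h1 : (⟨n - (k+1), hlt⟩ : Fin n).castSucc = (⟨n - (k+1), by omega⟩ : Fin (n+1)) := by
          apply Fin.ext; simp [Fin.castSucc]
        have h2 : (⟨n - (k+1), hlt⟩ : Fin n).succ = (⟨n - k, by omega⟩ : Fin (n+1)) := by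
          apply Fin.ext; simp [Fin.succ]; omega
        rw [h1, h2] at hstep
        have hval := congrArg (fun v : (EL X).V => v.val) hstep
        calc ((e ⟨n - (k+1), by omega⟩).val.2.val : Finset X)
            = (e ⟨n - k, by omega⟩).val.1.val := hval
          _ ⊆ (e ⟨n - k, by omega⟩).val.2.val := (e _).property
          _ ⊆ (e 0).val.1.val := ih (by omega)
    have hr0 : ((e 0).val.2.val : Finset X) ⊆ (e 0).val.1.val := by
      have h := mono n le_rfl
      have h0 : (⟨n - n, by omega⟩ : Fin (n+1)) = 0 := by
        apply Fin.ext; simp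
      rwa [h0] at h
    have heq : (EL X).r (e 0) = (EL X).s (e 0) := by
      apply Subtype.ext
      exact Finset.Subset.antisymm hr0 (e 0).property
    refine ⟨?_, heq⟩
    by_contra hn
    have hn1 : 0 < n := Nat.pos_of_ne_zero hn
    apply hs ⟨0, hn1⟩
    have h0 : (⟨0, hn1⟩ : Fin n).castSucc = (0 : Fin (n+1)) := rfl
    rw [h0]
    exact heq
  have part2 : ∀ v : (EL X).V, Nonempty (SimpleCyclesAt (EL X) v) ∧
      Subsingleton (SimpleCyclesAt (EL X) v) := by
    intro v
    refine ⟨⟨⟨⟨0, fun _ => ⟨(v, v), subset_rfl⟩⟩, ⟨⟨fun i => i.elim0, rfl⟩,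
        fun i => i.elim0⟩, rfl⟩⟩, ?_⟩
    constructor
    rintro ⟨⟨n, f⟩, hf, hfv⟩ ⟨⟨m, g⟩, hg, hgv⟩
    obtain ⟨hn, hrf⟩ := key n f hf
    obtain ⟨hm, hrg⟩ := key m g hg
    subst hn; subst hm
    apply Subtype.ext
    simp only
    congr 1
    funext i
    have hi : i = 0 := Fin.ext (by omega)
    subst hi
    apply Subtype.ext
    apply Prod.ext
    · exact hfv.trans hgv.symm
    · exact (hrf.trans hfv).trans ((hrg.trans hgv).symm)
  refine ⟨key, part2, fun h => ?_⟩
  have v : (EL X).V := ⟨{Classical.arbitrary X}, Finset.singleton_nonempty _⟩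
  exact h v (part2 v)
end

section
/- Let κ be an ordinal with κ > 0 and let E_κ be the graph with vertex set {α : α < κ} and one edge from α to β whenever α < β. Then E_κ satisfies the Countable Separation Property if and only if κ has countable cofinality (i.e., κ is a successor ordinal, or κ is the supremum of a countable set of ordinals strictly less than κ). -/
/-- The graph `E_κ`: vertices are the ordinals `α < κ`, with one edge from `α` to `β`
whenever `α < β`. -/
def Ekappa (κ : Ordinal) : DGraph where
  V := {α : Ordinal // α < κ}
  E := {p : {α : Ordinal // α < κ} × {α : Ordinal // α < κ} // p.1.val < p.2.val}
  s := fun e => e.val.1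
  r := fun e => e.val.2

lemma Ekappa_reach_iff {κ : Ordinal} (u v : (Ekappa κ).V) :
    (Ekappa κ).Reach u v ↔ u.val ≤ v.val := by
  constructor
  · intro h
    induction h with
    | refl => exact le_refl _
    | tail _ step ih =>
      obtain ⟨e, hs, hr⟩ := step
      rw [← hs] at ih
      rw [← hr]
      exact ih.trans e.prop.le
  · intro h
    rcases eq_or_lt_of_le h with heq | hlt
    · have : u = v := Subtype.ext heq
      subst this
      exact Relation.ReflTransGen.refl
    · exact Relation.ReflTransGen.single ⟨⟨(u, v), hlt⟩, rfl, rfl⟩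

/-- For an ordinal `κ > 0`, the graph `E_κ` satisfies the Countable Separation Property if
and only if `κ` has countable cofinality, i.e. `κ` is a successor ordinal or `κ` is the
supremum of a countable set of ordinals strictly less than `κ`. -/
theorem Ekappa_csp_iff_countable_cofinality (κ : Ordinal) (hκ : 0 < κ) :
    (Ekappa κ).CSP ↔
      ((∃ β : Ordinal, κ = Order.succ β) ∨
        ∃ S : Set Ordinal, S.Countable ∧ (∀ β ∈ S, β < κ) ∧ κ = sSup S) := by
  constructor
  · rintro ⟨X, hXc, hX⟩
    set S : Set Ordinal := Subtype.val '' X with hS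
    have hSc : S.Countable := hXc.image _
    have hSlt : ∀ β ∈ S, β < κ := by rintro β ⟨x, _, rfl⟩; exact x.prop
    have hSbdd : BddAbove S := ⟨κ, fun β hβ => (hSlt β hβ).le⟩
    have hcof : ∀ α : Ordinal, α < κ → ∃ s ∈ S, α ≤ s := by
      intro α hα
      obtain ⟨x, hx, hr⟩ := hX ⟨α, hα⟩
      exact ⟨x.val, ⟨x, hx, rfl⟩, (Ekappa_reach_iff _ _).1 hr⟩
    have hsup_le : sSup S ≤ κ := csSup_le' fun β hβ => (hSlt β hβ).le
    rcases eq_or_lt_of_le hsup_le with heq | hlt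
    · exact Or.inr ⟨S, hSc, hSlt, heq.symm⟩
    · left
      refine ⟨sSup S, le_antisymm ?_ ?_⟩
      · by_contra hcon
        push_neg at hcon
        obtain ⟨s, hs, hle⟩ := hcof _ hcon
        exact absurd (le_csSup hSbdd hs) (not_le.2 (lt_of_lt_of_le (Order.lt_succ _) hle))
      · exact Order.succ_le_of_lt hlt
  · rintro (⟨β, rfl⟩ | ⟨S, hSc, hSlt, rfl⟩)
    · have hβ : β < Order.succ β := Order.lt_succ β
      refine ⟨{⟨β, hβ⟩}, Set.countable_singleton _, fun v => ?_⟩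
      exact ⟨⟨β, hβ⟩, rfl, (Ekappa_reach_iff _ _).2 (Order.le_of_lt_succ v.prop)⟩
    · have hSne : S.Nonempty := by
        by_contra h
        rw [Set.not_nonempty_iff_eq_empty] at h
        subst h
        simp at hκ
      refine ⟨{v | v.val ∈ S}, ?_, ?_⟩
      · exact (hSc.preimage (f := (Subtype.val : (Ekappa (sSup S)).V → Ordinal))
          Subtype.val_injective)
      · intro v
        obtain ⟨s, hs, hvs⟩ := exists_lt_of_lt_csSup hSne v.prop
        exact ⟨⟨s, hSlt s hs⟩, hs, (Ekappa_reach_iff _ _).2 hvs.le⟩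
end

section
/- Let X be an uncountable set and let E = E_K(X) be the graph whose vertices are the finite nonempty subsets of X, with an edge e_{A,A′} for A ⊆ A′ and a loop f_A at every A. Then E is downward directed but fails the Countable Separation Property, i.e. for every countable subset Y of E⁰ the set of vertices from which there is a path into Y is not all of E⁰. -/
/-- The graph `E_K(X)`: vertices are finite nonempty subsets of `X`; for `A ⊆ A′` there is
an edge `e_{A,A′}` from `A` to `A′`, and additionally each vertex `A` carries an extra
loop `f_A`. -/
def EK (X : Type*) : DGraph where
  V := {A : Finset X // A.Nonempty}
  E := {p : {A : Finset X // A.Nonempty} × {A : Finset X // A.Nonempty} // p.1.val ⊆ p.2.val}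
    ⊕ {A : Finset X // A.Nonempty}
  s := Sum.elim (fun e => e.val.1) id
  r := Sum.elim (fun e => e.val.2) id

/-- For an uncountable set `X`, the graph `E_K(X)` is downward directed but fails the
Countable Separation Property. -/
theorem EK_downwardDirected_not_csp (X : Type*) (hX : ¬ Countable X) :
    (EK X).DownwardDirected ∧ ¬ (EK X).CSP := by
  classical
  -- a single step in EK X implies subset
  have hstep : ∀ u v : (EK X).V, (EK X).Step u v → u.val ⊆ v.val := by
    rintro u v ⟨e, hs, hr⟩
    cases e with
    | inl e =>
      simp only [EK, Sum.elim_inl] at hs hr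
      subst hs; subst hr; exact e.property
    | inr e =>
      simp only [EK, Sum.elim_inr, id] at hs hr
      subst hs; subst hr; exact subset_rfl
  have hreach : ∀ u v : (EK X).V, (EK X).Reach u v → u.val ⊆ v.val := by
    intro u v h
    induction h with
    | refl => exact subset_rfl
    | tail _ h ih => exact ih.trans (hstep _ _ h)
  constructor
  · intro u v
    have hne : (u.val ∪ v.val).Nonempty := u.property.mono Finset.subset_union_left
    refine ⟨⟨u.val ∪ v.val, hne⟩, ?_, ?_⟩
    · exact Relation.ReflTransGen.single
        ⟨Sum.inl ⟨(u, ⟨u.val ∪ v.val, hne⟩), Finset.subset_union_left⟩, rfl, rfl⟩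
    · exact Relation.ReflTransGen.single
        ⟨Sum.inl ⟨(v, ⟨u.val ∪ v.val, hne⟩), Finset.subset_union_right⟩, rfl, rfl⟩
  · rintro ⟨Y, hYc, hY⟩
    -- the union of all elements of vertices in Y is countable
    set S : Set X := ⋃ y ∈ Y, (y.val : Set X) with hS
    have hSc : S.Countable := hYc.biUnion (fun y _ => (y.val : Set X).toFinite.countable)
    have hex : ∃ x : X, x ∉ S := by
      by_contra h
      push_neg at h
      have huniv : (Set.univ : Set X).Countable := hSc.mono (fun x _ => h x)
      exact hX (Set.countable_univ_iff.mp huniv)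
    obtain ⟨x, hx⟩ := hex
    obtain ⟨y, hyY, hry⟩ := hY ⟨{x}, Finset.singleton_nonempty x⟩
    have : x ∈ y.val := hreach _ _ hry (Finset.mem_singleton_self x)
    exact hx (Set.mem_biUnion hyY (by simpa using this))
end
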